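/- arXiv:2111.08483 — 7 statements merged into one kernel-verified Lean document; each statement's English description precedes it below -/
import Mathlib

section
/- Let a in R^{d+1} be a vector with strictly increasing entries (a_1 < a_2 < ... < a_{d+1}). Then for every nonzero x in R^{d+1} whose coordinates sum to 0, there exists some cyclic shift a^i of a (with i in {0, 1, ..., d}) such that the inner product of a^i with x is strictly positive. -/
/-- If `a ∈ ℝ^{d+1}` has strictly increasing entries, then for every nonzero `x`
with coordinate sum `0` some cyclic right shift `a^i` of `a` satisfies `⟨a^i, x⟩ > 0`. -/
theorem stmt_1 (d : ℕ) (a : Fin (d + 1) → ℝ) (ha : StrictMono a)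
    (x : Fin (d + 1) → ℝ) (hx : x ≠ 0) (hsum : ∑ j, x j = 0) :
    ∃ i : Fin (d + 1), 0 < ∑ j, a (j - i) * x j := by
  classical
  letI := Fin.instCommRing (d + 1)
  -- prefix sums
  set S : Fin (d + 1) → ℝ := fun j => ∑ m ∈ Finset.range (j.1 + 1), x (m : Fin (d + 1))
    with hSdef
  have hlast : S (Fin.last d) = 0 := by
    have h1 : ∑ m ∈ Finset.range (d + 1), x (m : Fin (d + 1)) = ∑ j, x j := by
      rw [← Fin.sum_univ_eq_sum_range (fun m => x (m : Fin (d + 1))) (d + 1)]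
      exact Finset.sum_congr rfl fun j _ => by rw [Fin.cast_val_eq_self]
    simpa [hSdef, h1] using hsum
  have hstep : ∀ j : Fin (d + 1), x j = S j - S (j - 1) := by
    intro j
    rcases eq_or_ne j 0 with rfl | hj
    · have h1 : (0 : Fin (d + 1)) - 1 = Fin.last d := by
        have := Fin.last_add_one d
        have h2 : Fin.last d + 1 - 1 = Fin.last d := add_sub_cancel_right _ _
        rw [this] at h2; exact h2
      rw [h1, hlast, hSdef]
      simp
    · have hv : ((j - 1 : Fin (d + 1)) : ℕ) = (j : ℕ) - 1 := by
        rw [Fin.coe_sub_one, if_neg hj]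
      have hj1 : 1 ≤ (j : ℕ) := Nat.one_le_iff_ne_zero.mpr (fun h => hj (Fin.ext h))
      have h4 : (j : ℕ) - 1 + 1 = (j : ℕ) := by omega
      have h5 : S j = S (j - 1) + x j := by
        simp only [hSdef]
        have h3 : (j : ℕ) + 1 = ((j : ℕ) - 1 + 1) + 1 := by omega
        rw [h3, Finset.sum_range_succ, hv]
        congr 1
        rw [h4, Fin.cast_val_eq_self]
      rw [h5]; ring
  -- maximizer
  obtain ⟨j0, hj0⟩ := Finite.exists_max S
  set i : Fin (d + 1) := j0 + 1 with hi
  have hij : i - 1 = j0 := add_sub_cancel_right j0 1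
  have hlasti : Fin.last d + i = j0 := by
    have h1 : i - 1 + 1 = i := sub_add_cancel _ _
    calc Fin.last d + i = Fin.last d + (i - 1 + 1) := by rw [h1]
      _ = (Fin.last d + 1) + (i - 1) := by ring
      _ = i - 1 := by rw [Fin.last_add_one, zero_add]
      _ = j0 := hij
  refine ⟨i, ?_⟩
  -- rewrite the inner product
  have e1 : ∑ j, a (j - i) * x j = ∑ k, a k * x (k + i) := by
    apply Fintype.sum_equiv (Equiv.subRight i)
    intro j
    simp [Equiv.subRight, sub_add_cancel]
  have e2 : ∑ k : Fin (d + 1), a k * S (k + i - 1) = ∑ k : Fin (d + 1), a (k + 1) * S (k + i) := by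
    refine (Fintype.sum_equiv (Equiv.addRight 1) _ _ ?_).symm
    intro k
    simp only [Equiv.coe_addRight]
    congr 2
    rw [add_comm k 1, add_assoc, add_sub_cancel_left]
  have e3 : ∑ k : Fin (d + 1), (a k - a (k + 1)) = 0 := by
    rw [Finset.sum_sub_distrib, sub_eq_zero]
    exact Fintype.sum_equiv (Equiv.subRight 1) _ _ (fun k => by rw [Equiv.subRight_apply, sub_add_cancel])
  have e4 : ∑ k, a k * x (k + i) = ∑ k, (a k - a (k + 1)) * (S (k + i) - S j0) := by
    have expand : ∀ k : Fin (d + 1),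
        (a k - a (k + 1)) * (S (k + i) - S j0)
          = (a k * S (k + i) - a (k + 1) * S (k + i)) - (a k - a (k + 1)) * S j0 := by
      intro k; ring
    rw [Finset.sum_congr rfl fun k _ => expand k, Finset.sum_sub_distrib,
      Finset.sum_sub_distrib, ← Finset.sum_mul, e3, zero_mul, sub_zero, ← e2,
      ← Finset.sum_sub_distrib]
    refine Finset.sum_congr rfl fun k _ => ?_
    rw [hstep (k + i)]; ring
  rw [e1, e4]
  -- positivity
  have hnonneg : ∀ k : Fin (d + 1), 0 ≤ (a k - a (k + 1)) * (S (k + i) - S j0) := by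
    intro k
    rcases eq_or_ne k (Fin.last d) with rfl | hk
    · rw [hlasti]; simp
    · have hkd : (k : ℕ) < d := Fin.val_lt_last hk
      have hlt : k < k + 1 := by
        rw [Fin.lt_def, Fin.val_add_one_of_lt (by rwa [Fin.lt_iff_val_lt_val, Fin.val_last])]
        omega
      have h1 : a k < a (k + 1) := ha hlt
      have h2 : S (k + i) ≤ S j0 := hj0 _
      nlinarith
  -- a strictly positive term
  obtain ⟨m, hm⟩ : ∃ m, x m ≠ 0 := Function.ne_iff.mp hx
  obtain ⟨c, hc⟩ : ∃ c, S c < S j0 := by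
    rcases lt_or_eq_of_le (hj0 m) with h | h
    · exact ⟨m, h⟩
    · refine ⟨m - 1, lt_of_le_of_ne (hj0 _) ?_⟩
      intro hc
      apply hm
      rw [hstep m, h, hc, sub_self]
  have hcne : c ≠ j0 := fun h => absurd (h ▸ hc) (lt_irrefl _)
  refine Finset.sum_pos' (fun k _ => hnonneg k) ⟨c - i, Finset.mem_univ _, ?_⟩
  have hci : c - i + i = c := sub_add_cancel c i
  have hclast : c - i ≠ Fin.last d := by
    intro h
    apply hcne
    rw [← hci, h, hlasti]
  have hkd : ((c - i : Fin (d + 1)) : ℕ) < d := Fin.val_lt_last hclast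
  have hlt : c - i < c - i + 1 := by
    rw [Fin.lt_def, Fin.val_add_one_of_lt (by rwa [Fin.lt_iff_val_lt_val, Fin.val_last])]
    omega
  have h1 : a (c - i) < a (c - i + 1) := ha hlt
  rw [hci]
  nlinarith
end

section
/- Let a in R^{d+1} be a vector with nondecreasing entries (a_1 <= a_2 <= ... <= a_{d+1}). Then for every integer vector x in Z^{d+1} whose coordinates sum to 1, there exists a cyclic shift a^i of a such that the inner product of a^i with x is at least a_{d+1}. -/
/-- If `a ∈ ℝ^{d+1}` has nondecreasing entries, then for every integer vector `x`
with coordinate sum `1` some cyclic right shift `a^i` of `a` satisfies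
`⟨a^i, x⟩ ≥ a_{d+1}`. -/
theorem stmt_2 (d : ℕ) (a : Fin (d + 1) → ℝ) (ha : Monotone a)
    (x : Fin (d + 1) → ℤ) (hsum : ∑ j, x j = 1) :
    ∃ i : Fin (d + 1), a (Fin.last d) ≤ ∑ j, a (j - i) * (x j : ℝ) := by
  classical
  open Fin.NatCast in set y : ℕ → ℤ := fun m => x (m : Fin (d+1)) with hy
  set P : ℕ → ℤ := fun m => ∑ t ∈ Finset.range m, y t with hPdef
  have hP0 : P 0 = 0 := by simp [hPdef]
  have hPsucc : ∀ m, P (m + 1) = P m + y m := fun m => Finset.sum_range_succ y m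
  have hPn : P (d+1) = 1 := by
    have h1 : ∑ j : Fin (d+1), y j.val = ∑ t ∈ Finset.range (d+1), y t :=
      Fin.sum_univ_eq_sum_range (fun t => y t) (d+1)
    have h2 : ∑ j : Fin (d+1), y j.val = 1 := by
      rw [← hsum]
      exact Finset.sum_congr rfl fun j _ => by simp [hy, Fin.cast_val_eq_self]
    simp only [hPdef]
    rw [← h1, h2]
  have hyper : ∀ m, y (d + 1 + m) = y m := by
    intro m
    simp only [hy]
    congr 1
    ext
    simp [Fin.val_natCast, Nat.add_mod_left]
  have hPadd : ∀ r, P (d + 1 + r) = 1 + P r := by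
    intro r
    induction r with
    | zero => simp [hPn, hP0]
    | succ r ih =>
      rw [← Nat.add_assoc, hPsucc, ih, hyper, hPsucc]
      ring
  have hQ : ∃ m, m < d + 1 ∧ ∀ m' < d + 1, P m' ≤ P m := by
    obtain ⟨m, hm, hmax⟩ := Finset.exists_max_image (Finset.range (d+1)) P ⟨0, by simp⟩
    exact ⟨m, Finset.mem_range.mp hm, fun m' hm' => hmax m' (Finset.mem_range.mpr hm')⟩
  have hspec := Nat.find_spec hQ
  set i₀ := Nat.find hQ with hi₀def
  obtain ⟨hi₀n, hmax⟩ := hspec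
  have hmin : ∀ m < i₀, P m ≤ P i₀ - 1 := by
    intro m hm
    have h1 := Nat.find_min hQ hm
    push_neg at h1
    obtain ⟨m', hm', hlt⟩ := h1 (hm.trans hi₀n)
    have := hmax m' hm'
    omega
  have hV : ∀ k, k + 2 ≤ d + 1 → P (i₀ + (k+1)) ≤ P i₀ := by
    intro k hk
    by_cases hc : i₀ + (k+1) < d + 1
    · exact hmax _ hc
    · have hrlt : i₀ + (k+1) - (d+1) < i₀ := by omega
      have h2 := hmin _ hrlt
      have h3 : P (i₀ + (k+1)) = 1 + P (i₀ + (k+1) - (d+1)) := by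
        rw [← hPadd]
        congr 1
        omega
      omega
  refine ⟨⟨i₀, hi₀n⟩, ?_⟩
  set i : Fin (d+1) := ⟨i₀, hi₀n⟩ with hidef
  open Fin.NatCast in set b : ℕ → ℝ := fun m => a (m : Fin (d+1)) with hb
  set s : Fin (d+1) → ℕ := fun j => (j - i).val with hs
  have hsle : ∀ j, s j ≤ d := fun j => Nat.lt_succ_iff.mp (j - i).isLt
  have hlast : a (Fin.last d) = b d := by
    simp only [hb]
    congr 1
    ext
    simp [Fin.val_natCast, Nat.mod_eq_of_lt]
  have hshift : ∀ j, a (j - i) = b (s j) := by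
    intro j
    simp only [hb, hs, Fin.cast_val_eq_self]
  have hx1 : ∑ j, (x j : ℝ) = 1 := by
    have h : ((∑ j, x j : ℤ) : ℝ) = 1 := by rw [hsum]; norm_num
    push_cast at h
    exact h
  have htel : ∀ m ≤ d, b d - b m = ∑ k ∈ Finset.Ico m d, (b (k+1) - b k) := by
    intro m hm
    rw [Finset.sum_Ico_eq_sub _ hm, Finset.sum_range_sub, Finset.sum_range_sub]
    ring
  have hδ : ∀ k < d, 0 ≤ b (k+1) - b k := by
    intro k hk
    open Fin.NatCast in
    have h : a ((k : ℕ) : Fin (d+1)) ≤ a (((k+1 : ℕ)) : Fin (d+1)) := by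
      apply ha
      rw [Fin.le_def, Fin.val_natCast, Fin.val_natCast,
        Nat.mod_eq_of_lt (by omega), Nat.mod_eq_of_lt (by omega)]
      omega
    simp only [hb]
    linarith
  have e6 : ∀ K, P (i₀ + K) = P i₀ + ∑ u ∈ Finset.range K, y (i₀ + u) := by
    intro K
    induction K with
    | zero => simp
    | succ K ih =>
      rw [show i₀ + (K+1) = (i₀ + K) + 1 from rfl, hPsucc, ih, Finset.sum_range_succ]
      ring
  have hW : ∀ k < d, (∑ j : Fin (d+1), if s j ≤ k then x j else 0) ≤ 0 := by
    intro k hk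
    have e2 : ∑ j : Fin (d+1), (if s j ≤ k then x j else 0)
        = ∑ t : Fin (d+1), (if s (t + i) ≤ k then x (t + i) else 0) :=
      (Equiv.sum_comp (Equiv.addRight i) (fun j => if s j ≤ k then x j else 0)).symm
    have e3 : ∀ t : Fin (d+1), (if s (t + i) ≤ k then x (t + i) else 0)
        = (if t.val ≤ k then y (i₀ + t.val) else 0) := by
      intro t
      have h1 : s (t + i) = t.val := by simp [hs, add_sub_cancel_right]
      have h2 : x (t + i) = y (i₀ + t.val) := by
        simp only [hy]
        congr 1
        rw [Fin.ext_iff, Fin.val_natCast, Fin.add_def, hidef]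
        simp [Nat.add_comm]
      rw [h1, h2]
    have e4 : ∑ t : Fin (d+1), (if t.val ≤ k then y (i₀ + t.val) else 0)
        = ∑ u ∈ Finset.range (d+1), (if u ≤ k then y (i₀ + u) else 0) :=
      Fin.sum_univ_eq_sum_range (fun u => if u ≤ k then y (i₀ + u) else 0) (d+1)
    have e5 : ∑ u ∈ Finset.range (d+1), (if u ≤ k then y (i₀ + u) else 0)
        = ∑ u ∈ Finset.range (k+1), y (i₀ + u) := by
      rw [← Finset.sum_subset (Finset.range_subset_range.mpr (show k+1 ≤ d+1 by omega))
          (fun u _ hnu => by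
            simp only [Finset.mem_range, not_lt] at hnu
            simp [show ¬ u ≤ k by omega])]
      exact Finset.sum_congr rfl fun u hu => by
        simp [Nat.lt_succ_iff.mp (Finset.mem_range.mp hu)]
    have hfin : ∑ j : Fin (d+1), (if s j ≤ k then x j else 0)
        = P (i₀ + (k+1)) - P i₀ := by
      rw [e2, Finset.sum_congr rfl (fun t _ => e3 t), e4, e5, e6 (k+1)]
      ring
    rw [hfin]
    have := hV k (by omega)
    omega
  -- final assembly
  rw [hlast]
  have hrw : ∑ j, a (j - i) * (x j : ℝ) = ∑ j, (x j : ℝ) * b (s j) :=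
    Finset.sum_congr rfl fun j _ => by rw [hshift j, mul_comm]
  rw [hrw]
  have key : ∑ j, (x j : ℝ) * (b d - b (s j)) ≤ 0 := by
    have estep : ∀ j : Fin (d+1), (x j : ℝ) * (b d - b (s j))
        = ∑ k ∈ Finset.range d, (if s j ≤ k then (x j : ℝ) * (b (k+1) - b k) else 0) := by
      intro j
      rw [htel (s j) (hsle j), Finset.mul_sum]
      rw [show Finset.Ico (s j) d = (Finset.range d).filter (fun k => s j ≤ k) by
        ext u
        simp only [Finset.mem_Ico, Finset.mem_filter, Finset.mem_range]
        omega]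
      rw [Finset.sum_filter]
    calc ∑ j, (x j : ℝ) * (b d - b (s j))
        = ∑ j, ∑ k ∈ Finset.range d, (if s j ≤ k then (x j:ℝ) * (b (k+1) - b k) else 0) :=
          Finset.sum_congr rfl fun j _ => estep j
      _ = ∑ k ∈ Finset.range d, ∑ j, (if s j ≤ k then (x j:ℝ) * (b (k+1) - b k) else 0) :=
          Finset.sum_comm
      _ ≤ 0 := by
          apply Finset.sum_nonpos
          intro k hk
          have hkd := Finset.mem_range.mp hk
          have h1 : ∑ j, (if s j ≤ k then (x j:ℝ) * (b (k+1) - b k) else 0)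
              = (∑ j, (if s j ≤ k then (x j:ℝ) else 0)) * (b (k+1) - b k) := by
            rw [Finset.sum_mul]
            exact Finset.sum_congr rfl fun j _ => by rw [ite_mul, zero_mul]
          rw [h1]
          have h2 : (∑ j, (if s j ≤ k then (x j:ℝ) else 0))
              = ((∑ j : Fin (d+1), if s j ≤ k then x j else 0 : ℤ) : ℝ) := by
            push_cast
            rfl
          have h3 : (∑ j, (if s j ≤ k then (x j:ℝ) else 0)) ≤ 0 := by
            rw [h2]
            exact_mod_cast hW k hkd
          have h4 := hδ k hkd
          nlinarith
  have expand : ∑ j, (x j:ℝ) * (b d - b (s j)) = b d - ∑ j, (x j:ℝ) * b (s j) := by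
    simp only [mul_sub]
    rw [Finset.sum_sub_distrib, ← Finset.sum_mul, hx1, one_mul]
  rw [expand] at key
  linarith
end

section
/- Let a in R^{d+1} have strictly increasing entries, and define the set Delta = { x in R^{d+1} : sum of entries of x equals 1, and for each i in {0,...,d}, the inner product of the cyclic shift a^i with x is at most a_{d+1} }. Then Delta contains no integer point in its relative interior, i.e., there is no x in Z^{d+1} with sum of entries 1 satisfying all d+1 inequalities strictly. -/
/-- Abel summation auxiliary lemma: if all proper initial partial sums of `y` are
nonpositive while the total sum is `1`, then `∑ a m * y m ≥ a d` for increasing `a`. -/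
lemma abel_aux (d : ℕ) (a : ℕ → ℝ) (y : ℕ → ℤ)
    (hmono : ∀ k < d, a k < a (k + 1))
    (h : ∀ k, 1 ≤ k → k ≤ d → (∑ m ∈ Finset.range k, y m) ≤ 0)
    (hsum : ∑ m ∈ Finset.range (d + 1), y m = 1) :
    a d ≤ ∑ m ∈ Finset.range (d + 1), a m * (y m : ℝ) := by
  have hby := Finset.sum_range_by_parts a (fun m => (y m : ℝ)) (d + 1)
  simp only [smul_eq_mul, Nat.add_sub_cancel] at hby
  rw [hby]
  have h1 : (∑ i ∈ Finset.range (d + 1), ((y i : ℝ))) = 1 := by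
    have h := congrArg (fun z : ℤ => (z : ℝ)) hsum
    push_cast at h
    exact h
  rw [h1, mul_one]
  have h2 : ∑ i ∈ Finset.range d, (a (i + 1) - a i) * (∑ j ∈ Finset.range (i + 1), (y j : ℝ)) ≤ 0 := by
    apply Finset.sum_nonpos
    intro i hi
    rw [Finset.mem_range] at hi
    apply mul_nonpos_of_nonneg_of_nonpos
    · have := hmono i hi
      linarith
    · have := h (i + 1) (by omega) (by omega)
      have : ((∑ j ∈ Finset.range (i + 1), y j : ℤ) : ℝ) ≤ 0 := by exact_mod_cast this
      push_cast at this
      linarith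
  linarith

open Fin.NatCast

/-- For `a` with strictly increasing entries, the simplex
`Δ = {x : ∑ x = 1, ⟨a^i, x⟩ ≤ a_{d+1} ∀ i}` contains no integer point in its relative
interior: no integer point with coordinate sum `1` satisfies all inequalities strictly. -/
theorem stmt_3 (d : ℕ) (a : Fin (d + 1) → ℝ) (ha : StrictMono a) :
    ¬ ∃ x : Fin (d + 1) → ℤ, (∑ j, x j = 1) ∧
      ∀ i : Fin (d + 1), ∑ j, a (j - i) * (x j : ℝ) < a (Fin.last d) := by
  rintro ⟨x, hsum, hlt⟩
  set x' : ℕ → ℤ := fun m => x (m : Fin (d + 1)) with hx'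
  set Q : ℕ → ℤ := fun m => ∑ k ∈ Finset.range m, x' k with hQ
  -- period sums: any window of length d+1 sums to 1
  have hwin : ∀ s : ℕ, ∑ m ∈ Finset.range (d + 1), x' (m + s) = 1 := by
    intro s
    have : ∑ m ∈ Finset.range (d + 1), x' (m + s)
        = ∑ k : Fin (d + 1), x (k + (s : Fin (d + 1))) := by
      rw [← Fin.sum_univ_eq_sum_range (fun m => x' (m + s))]
      apply Finset.sum_congr rfl
      intro k _
      simp only [hx']
      congr 1
      push_cast
      simp [Fin.cast_val_eq_self]
    rw [this, ← hsum]
    exact Fintype.sum_equiv (Equiv.addRight ((s : Fin (d + 1)))) _ _ (fun k => rfl)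
  have hper : ∀ m : ℕ, Q (m + (d + 1)) = Q m + 1 := by
    intro m
    have hms : m ≤ m + (d + 1) := by omega
    have h1 : Q (m + (d + 1)) - Q m = ∑ k ∈ Finset.Ico m (m + (d + 1)), x' k := by
      rw [Finset.sum_Ico_eq_sub _ hms]
    have h2 : ∑ k ∈ Finset.Ico m (m + (d + 1)), x' k
        = ∑ k ∈ Finset.range (d + 1), x' (m + k) := by
      rw [Finset.sum_Ico_eq_sum_range]
      simp
    have h3 : ∑ k ∈ Finset.range (d + 1), x' (m + k) = 1 := by
      rw [← hwin m]
      apply Finset.sum_congr rfl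
      intro k _
      rw [Nat.add_comm]
    omega
  -- key claim: from every position, some proper window has positive sum
  have key : ∀ s : ℕ, ∃ k, 1 ≤ k ∧ k ≤ d ∧ Q s + 1 ≤ Q (s + k) := by
    intro s
    by_contra hc
    push_neg at hc
    have habs := hlt ((s : Fin (d + 1)))
    -- rewrite the inner product via the shift k ↦ k + s
    have hre : ∑ j, a (j - (s : Fin (d + 1))) * (x j : ℝ)
        = ∑ m ∈ Finset.range (d + 1), a (m : Fin (d + 1)) * (x' (m + s) : ℝ) := by
      have hstep : ∑ j, a (j - (s : Fin (d + 1))) * (x j : ℝ)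
          = ∑ k : Fin (d + 1), a k * (x (k + (s : Fin (d + 1))) : ℝ) := by
        refine (Fintype.sum_equiv (Equiv.addRight ((s : Fin (d + 1)))) _ _ ?_).symm
        intro k
        simp only [Equiv.coe_addRight, add_sub_cancel_right]
      rw [hstep, ← Fin.sum_univ_eq_sum_range (fun m => a (m : Fin (d + 1)) * (x' (m + s) : ℝ))]
      apply Finset.sum_congr rfl
      intro k _
      simp only [hx']
      congr 2
      · simp [Fin.cast_val_eq_self]
      · push_cast
        simp [Fin.cast_val_eq_self]
    -- apply the Abel lemma
    have hmono' : ∀ k < d, a ((k : ℕ) : Fin (d + 1)) < a (((k + 1 : ℕ)) : Fin (d + 1)) := by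
      intro k hk
      apply ha
      rw [Fin.lt_def]
      rw [Fin.val_natCast, Fin.val_natCast]
      rw [Nat.mod_eq_of_lt (by omega), Nat.mod_eq_of_lt (by omega)]
      omega
    have hpart : ∀ k, 1 ≤ k → k ≤ d → (∑ m ∈ Finset.range k, x' (m + s)) ≤ 0 := by
      intro k h1k hkd
      have hshift : ∑ m ∈ Finset.range k, x' (m + s) = Q (s + k) - Q s := by
        show _ = (∑ j ∈ Finset.range (s + k), x' j) - ∑ j ∈ Finset.range s, x' j
        rw [← Finset.sum_Ico_eq_sub _ (by omega : s ≤ s + k)]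
        rw [Finset.sum_Ico_eq_sum_range]
        simp only [Nat.add_sub_cancel_left]
        apply Finset.sum_congr rfl
        intro m _
        rw [Nat.add_comm]
      have := hc k h1k hkd
      omega
    have habel := abel_aux d (fun m => a ((m : ℕ) : Fin (d + 1))) (fun m => x' (m + s))
      hmono' hpart (hwin s)
    rw [hre] at habs
    have hlast : a (((d : ℕ)) : Fin (d + 1)) = a (Fin.last d) := by
      congr 1
      ext
      simp [Fin.val_natCast, Nat.mod_eq_of_lt]
    rw [← hlast] at habs
    exact absurd habs (not_lt.mpr habel)
  -- build the climbing sequence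
  choose g hg1 hg2 hg3 using key
  let f : ℕ → ℕ := fun N => Nat.rec 0 (fun _ p => p + g p) N
  have hf0 : f 0 = 0 := rfl
  have hfS : ∀ N, f (N + 1) = f N + g (f N) := fun N => rfl
  have hQf : ∀ N : ℕ, (N : ℤ) ≤ Q (f N) := by
    intro N
    induction N with
    | zero => simp [hf0, hQ]
    | succ n ih =>
      have := hg3 (f n)
      rw [hfS]
      push_cast
      omega
  have hfle : ∀ N : ℕ, f N ≤ N * d := by
    intro N
    induction N with
    | zero => simp [hf0]
    | succ n ih =>
      have := hg2 (f n)
      rw [hfS]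
      calc f n + g (f n) ≤ n * d + d := by omega
      _ = (n + 1) * d := by ring
  -- Q m = Q (m % (d+1)) + m / (d+1)
  have hQadd : ∀ t r : ℕ, Q (r + t * (d + 1)) = Q r + t := by
    intro t
    induction t with
    | zero => simp
    | succ n ih =>
      intro r
      have : r + (n + 1) * (d + 1) = (r + n * (d + 1)) + (d + 1) := by ring
      rw [this, hper, ih]
      push_cast
      ring
  have hQdiv : ∀ m : ℕ, Q m = Q (m % (d + 1)) + (m / (d + 1) : ℕ) := by
    intro m
    conv_lhs => rw [show m = m % (d + 1) + (m / (d + 1)) * (d + 1) by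
      rw [Nat.mod_add_div' m (d + 1)]]
    rw [hQadd]
  -- bound Q on a period
  set B : ℤ := ∑ m ∈ Finset.range (d + 1), |x' m| with hB
  have hBnn : 0 ≤ B := Finset.sum_nonneg fun m _ => abs_nonneg _
  have hQB : ∀ r, r < d + 1 → Q r ≤ B := by
    intro r hr
    calc Q r ≤ ∑ m ∈ Finset.range r, |x' m| :=
          Finset.sum_le_sum fun m _ => le_abs_self _
      _ ≤ B := Finset.sum_le_sum_of_subset_of_nonneg
          (Finset.range_subset_range.mpr (by omega)) (fun m _ _ => abs_nonneg _)
  -- final contradiction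
  set c : ℕ := B.toNat + 1 with hc
  set N : ℕ := (d + 1) * c with hN
  have h1 : (N : ℤ) ≤ Q (f N) := hQf N
  have h2 : Q (f N) = Q (f N % (d + 1)) + (f N / (d + 1) : ℕ) := hQdiv (f N)
  have h3 : Q (f N % (d + 1)) ≤ B := hQB _ (Nat.mod_lt _ (by omega))
  have h4 : f N / (d + 1) ≤ c * d := by
    have hle : f N ≤ N * d := hfle N
    have : N * d = (c * d) * (d + 1) := by rw [hN]; ring
    calc f N / (d + 1) ≤ N * d / (d + 1) := Nat.div_le_div_right hle
      _ = c * d := by rw [this, Nat.mul_div_cancel _ (by omega : 0 < d + 1)]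
  have hBt : (B.toNat : ℤ) = B := Int.toNat_of_nonneg hBnn
  have h5 : (N : ℤ) = (d + 1) * (B.toNat + 1) := by rw [hN, hc]; push_cast; ring
  have h6 : ((f N / (d + 1) : ℕ) : ℤ) ≤ (c : ℤ) * d := by exact_mod_cast h4
  have h7 : (c : ℤ) = B.toNat + 1 := by rw [hc]; push_cast; ring
  -- N ≤ Q(fN) ≤ B + c*d ; N = (d+1)*c = c*d + c ⇒ c ≤ B, contradiction
  have : (d + 1 : ℤ) * (B.toNat + 1) ≤ B + (B.toNat + 1) * d := by
    rw [← h5, ← h7]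
    calc (N : ℤ) ≤ Q (f N) := h1
      _ = Q (f N % (d + 1)) + (f N / (d + 1) : ℕ) := h2
      _ ≤ B + (c : ℤ) * d := by
          have := h3; have := h6; omega
      _ = B + (c : ℤ) * d := rfl
  nlinarith [hBt, hBnn]
end

section
/- Let a in R^{d+1} have strictly increasing entries and define Delta = { x in R^{d+1} : sum of entries of x equals 1, and for each i in {0,...,d}, <a^i, x> <= a_{d+1} }. Then Delta is bounded. -/
/-- For `a` with strictly increasing entries, the set
`Δ = {x : ∑ x = 1, ⟨a^i, x⟩ ≤ a_{d+1} ∀ i}` is bounded. -/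
theorem stmt_4 (d : ℕ) (a : Fin (d + 1) → ℝ) (ha : StrictMono a) :
    Bornology.IsBounded {x : Fin (d + 1) → ℝ | (∑ j, x j = 1) ∧
      ∀ i : Fin (d + 1), ∑ j, a (j - i) * x j ≤ a (Fin.last d)} := by
  obtain rfl | ⟨e, rfl⟩ : d = 0 ∨ ∃ e, d = e + 1 := by
    rcases d with _ | e
    exacts [Or.inl rfl, Or.inr ⟨e, rfl⟩]
  · rw [isBounded_iff_forall_norm_le]
    refine ⟨1, fun x hx => ?_⟩
    obtain ⟨h1, -⟩ := hx
    rw [pi_norm_le_iff_of_nonneg zero_le_one]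
    intro i
    fin_cases i
    have : x 0 = 1 := by simpa using h1
    simp [this]
  · rw [isBounded_iff_forall_norm_le]
    set A := a (Fin.last (e + 1)) with hA
    set S := ∑ k, a k with hS
    set B := (e + 2) * A - S with hB
    have hne : (Finset.univ.erase (0 : Fin (e + 2))).Nonempty := ⟨1, by simp⟩
    set δ := (Finset.univ.erase (0 : Fin (e + 2))).inf' hne (fun k => a k - a (k - 1)) with hδ
    have hneg1 : (0 : Fin (e + 2)) - 1 = Fin.last (e + 1) := by
      ext
      rw [zero_sub]
      exact Fin.coe_neg_one
    have hgap : ∀ k : Fin (e + 2), k ≠ 0 → 0 < a k - a (k - 1) := by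
      intro k hk
      have hlt : k - 1 < k := by
        rw [Fin.lt_def, Fin.coe_sub_one, if_neg hk]
        have : (k : ℕ) ≠ 0 := fun h => hk (Fin.ext h)
        omega
      linarith [ha hlt]
    have hδpos : 0 < δ := by
      rw [hδ, Finset.lt_inf'_iff]
      intro k hk
      exact hgap k (Finset.ne_of_mem_erase hk)
    have hBnn : 0 ≤ B := by
      have h1 : S ≤ (Finset.univ : Finset (Fin (e+2))).card • A :=
        Finset.sum_le_card_nsmul Finset.univ a A
          (fun k _ => (ha.monotone (Fin.le_last k)))
      rw [nsmul_eq_mul, Finset.card_univ, Fintype.card_fin] at h1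
      push_cast at h1
      linarith
    refine ⟨1 + B / δ, fun x hx => ?_⟩
    obtain ⟨hsum, hcon⟩ := hx
    set E := fun i : Fin (e + 2) => ∑ j, a (j - i) * x j with hE
    have hEsum : ∑ i, E i = S := by
      rw [hE, Finset.sum_comm]
      have : ∀ j : Fin (e + 2), ∑ i, a (j - i) * x j = S * x j := by
        intro j
        rw [← Finset.sum_mul, hS]
        congr 1
        exact Fintype.sum_equiv (Equiv.subLeft j) _ _ (fun i => rfl)
      rw [Finset.sum_congr rfl (fun j _ => this j), ← Finset.mul_sum, hsum, mul_one]
    have hElb : ∀ i, S - (e + 1) * A ≤ E i := by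
      intro i
      have hsplit : E i + ∑ i' ∈ Finset.univ.erase i, E i' = S := by
        rw [← hEsum, Finset.add_sum_erase _ _ (Finset.mem_univ i)]
      have hle : ∑ i' ∈ Finset.univ.erase i, E i' ≤ (e + 1) * A := by
        have h1 : ∑ i' ∈ Finset.univ.erase i, E i' ≤ (Finset.univ.erase i).card • A :=
          Finset.sum_le_card_nsmul (Finset.univ.erase i) E A (fun i' _ => hcon i')
        have hcard : (Finset.univ.erase i).card = e + 1 := by
          rw [Finset.card_erase_of_mem (Finset.mem_univ i)]
          simp
        rw [hcard, nsmul_eq_mul] at h1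
        push_cast at h1
        linarith
      linarith
    have hgapsum : ∑ k ∈ Finset.univ.erase (0 : Fin (e + 2)), (a k - a (k - 1)) = A - a 0 := by
      have h0 : ∑ k : Fin (e + 2), (a k - a (k - 1)) = 0 := by
        rw [Finset.sum_sub_distrib]
        have : ∑ k : Fin (e + 2), a (k - 1) = ∑ k, a k :=
          Fintype.sum_equiv (Equiv.subRight 1) _ _ (fun k => rfl)
        rw [this, sub_self]
      have h1 : (a 0 - a (0 - 1)) + ∑ k ∈ Finset.univ.erase (0 : Fin (e + 2)),
          (a k - a (k - 1)) = ∑ k : Fin (e + 2), (a k - a (k - 1)) :=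
        Finset.add_sum_erase Finset.univ (fun k => a k - a (k - 1)) (Finset.mem_univ (0 : Fin (e + 2)))
      rw [h0, hneg1] at h1
      linarith
    have hkey : ∀ i : Fin (e + 2), E i - E (i + 1) =
        -((A - a 0) * x i) + ∑ k ∈ Finset.univ.erase (0 : Fin (e + 2)),
          (a k - a (k - 1)) * x (k + i) := by
      intro i
      have h1 : E i - E (i + 1) = ∑ j, (a (j - i) - a (j - i - 1)) * x j := by
        rw [hE, ← Finset.sum_sub_distrib]
        congr 1
        ext j
        rw [sub_add_eq_sub_sub]
        ring
      have h2 : ∑ j, (a (j - i) - a (j - i - 1)) * x j =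
          ∑ k : Fin (e + 2), (a k - a (k - 1)) * x (k + i) := by
        refine (Fintype.sum_equiv (Equiv.addRight i) _ _ (fun k => ?_)).symm
        simp [Equiv.coe_addRight, add_sub_cancel_right]
      rw [h1, h2, ← Finset.add_sum_erase Finset.univ _ (Finset.mem_univ (0 : Fin (e + 2)))]
      rw [hneg1, zero_add]
      ring
    obtain ⟨q, -, hq⟩ := Finset.exists_min_image Finset.univ x Finset.univ_nonempty
    obtain ⟨p, -, hp⟩ := Finset.exists_max_image Finset.univ x Finset.univ_nonempty
    have hq' : ∀ j, x q ≤ x j := fun j => hq j (Finset.mem_univ j)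
    have hp' : ∀ j, x j ≤ x p := fun j => hp j (Finset.mem_univ j)
    have hqle : (e + 2 : ℝ) * x q ≤ 1 := by
      have h1 : (Finset.univ : Finset (Fin (e+2))).card • x q ≤ ∑ j, x j :=
        Finset.card_nsmul_le_sum Finset.univ x (x q) (fun j _ => hq' j)
      rw [hsum, nsmul_eq_mul, Finset.card_univ, Fintype.card_fin] at h1
      push_cast at h1
      linarith
    have hple : (1 : ℝ) ≤ (e + 2) * x p := by
      have h1 : ∑ j, x j ≤ (Finset.univ : Finset (Fin (e+2))).card • x p :=
        Finset.sum_le_card_nsmul Finset.univ x (x p) (fun j _ => hp' j)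
      rw [hsum, nsmul_eq_mul, Finset.card_univ, Fintype.card_fin] at h1
      push_cast at h1
      linarith
    have hdiff : x p - x q ≤ B / δ := by
      rcases eq_or_ne p q with rfl | hpq
      · have : x p - x p = 0 := sub_self _
        rw [this]
        positivity
      · set k0 := p - q with hk0
        have hk0ne : k0 ≠ 0 := sub_ne_zero.2 hpq
        have hk0mem : k0 ∈ Finset.univ.erase (0 : Fin (e + 2)) := by
          simp [hk0ne]
        have hk0p : k0 + q = p := by rw [hk0]; exact sub_add_cancel p q
        -- lower bound the sum in hkey q
        have hsumlb : (a k0 - a (k0 - 1)) * (x p - x q) + (A - a 0) * x q ≤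
            ∑ k ∈ Finset.univ.erase (0 : Fin (e + 2)), (a k - a (k - 1)) * x (k + q) := by
          have heq : ∑ k ∈ Finset.univ.erase (0 : Fin (e + 2)), (a k - a (k - 1)) * x (k + q) =
              (∑ k ∈ Finset.univ.erase (0 : Fin (e + 2)), (a k - a (k - 1)) * (x (k + q) - x q))
                + (A - a 0) * x q := by
            rw [← hgapsum, Finset.sum_mul, ← Finset.sum_add_distrib]
            congr 1; ext k; ring
          rw [heq]
          gcongr
          have hsingle : (a k0 - a (k0 - 1)) * (x (k0 + q) - x q) ≤
              ∑ k ∈ Finset.univ.erase (0 : Fin (e + 2)), (a k - a (k - 1)) * (x (k + q) - x q) :=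
            Finset.single_le_sum (f := fun k => (a k - a (k - 1)) * (x (k + q) - x q))
              (fun k hk => mul_nonneg (le_of_lt (hgap k (Finset.ne_of_mem_erase hk)))
                (by linarith [hq' (k + q)])) hk0mem
          rw [hk0p] at hsingle
          exact hsingle
        have hup : E q - E (q + 1) ≤ B := by
          have h1 := hcon q
          have h2 := hElb (q + 1)
          have : E q ≤ A := h1
          rw [hB]
          linarith
        have hk := hkey q
        have hfin : (a k0 - a (k0 - 1)) * (x p - x q) ≤ B := by
          rw [hk] at hup
          linarith
        have hd0 : 0 < a k0 - a (k0 - 1) := hgap k0 hk0ne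
        have hδle : δ ≤ a k0 - a (k0 - 1) := Finset.inf'_le _ hk0mem
        calc x p - x q ≤ B / (a k0 - a (k0 - 1)) := (le_div_iff₀ hd0).2 (by linarith)
          _ ≤ B / δ := by gcongr
    have hBδ : (0:ℝ) ≤ B / δ := div_nonneg hBnn hδpos.le
    rw [pi_norm_le_iff_of_nonneg (by linarith : (0:ℝ) ≤ 1 + B / δ)]
    intro j
    rw [Real.norm_eq_abs, abs_le]
    have h2pos : (0 : ℝ) < e + 2 := by positivity
    have hxq1 : x q ≤ 1 := by nlinarith
    have hxp0 : 0 ≤ x p := by nlinarith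
    constructor
    · linarith [hq' j]
    · linarith [hp' j]
end

section
/- With d >= 2, delta = (1 - sqrt(2/(d+1)))^{-1}, a_i = delta^{i-1} - 1, and v defined by v_1 = (1 - d*delta^d + (d-2)*delta^{d+1} + delta^{d+2}) / ((delta-1)(delta^{d+1}-1)), v_2 = ... = v_d = (delta-1)*delta^d / (delta^{d+1}-1), v_{d+1} = (-delta + delta^d + (d-1)*delta^{d+1} - (d-1)*delta^{d+2}) / ((delta-1)(delta^{d+1}-1)), the inner product <a^i, v> equals a_{d+1} for every i in {1, ..., d}, where a^i is the cyclic right shift of a by i positions. -/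
/-- For every `i ∈ {1,…,d}` the cyclic right shift `a^i` satisfies `⟨a^i, v⟩ = a_{d+1}`. -/
theorem stmt_7 (d : ℕ) (hd : 2 ≤ d) (δ : ℝ) (hδ : δ = (1 - Real.sqrt (2 / (d + 1)))⁻¹)
    (a : Fin (d + 1) → ℝ) (ha : ∀ i : Fin (d + 1), a i = δ ^ (i : ℕ) - 1)
    (v : Fin (d + 1) → ℝ)
    (hv0 : v 0 = (1 - d * δ ^ d + ((d : ℝ) - 2) * δ ^ (d + 1) + δ ^ (d + 2)) /
      ((δ - 1) * (δ ^ (d + 1) - 1)))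
    (hvmid : ∀ i : Fin (d + 1), i ≠ 0 → i ≠ Fin.last d →
      v i = (δ - 1) * δ ^ d / (δ ^ (d + 1) - 1))
    (hvlast : v (Fin.last d) = (-δ + δ ^ d + ((d : ℝ) - 1) * δ ^ (d + 1) -
      ((d : ℝ) - 1) * δ ^ (d + 2)) / ((δ - 1) * (δ ^ (d + 1) - 1))) :
    ∀ i : Fin (d + 1), i ≠ 0 → ∑ j, a (j - i) * v j = a (Fin.last d) := by
  have hdR : (2:ℝ) ≤ (d:ℝ) := by exact_mod_cast hd
  have hδ1 : 1 < δ := by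
    rw [hδ, one_lt_inv_iff₀]
    have hx0 : (0:ℝ) < 2 / ((d:ℝ) + 1) := by positivity
    have hx1 : 2 / ((d:ℝ) + 1) < 1 := by
      rw [div_lt_one (by positivity)]; linarith
    have hs0 : 0 < Real.sqrt (2 / ((d:ℝ) + 1)) := Real.sqrt_pos.mpr hx0
    have hs1 : Real.sqrt (2 / ((d:ℝ) + 1)) < 1 := by
      rw [Real.sqrt_lt' one_pos]; nlinarith
    constructor <;> nlinarith
  have hδne : δ - 1 ≠ 0 := by nlinarith
  have hδ0 : (0:ℝ) < δ := by nlinarith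
  have hpow : (1:ℝ) < δ ^ (d + 1) := one_lt_pow₀ hδ1 (Nat.succ_ne_zero d)
  have hpne : δ ^ (d + 1) - 1 ≠ 0 := by nlinarith
  intro i hi
  set m : ℝ := (δ - 1) * δ ^ d / (δ ^ (d + 1) - 1) with hm
  -- reindex the sum
  have key : ∑ j, a (j - i) * v j = ∑ k, a k * v (k + i) := by
    exact Fintype.sum_equiv (Equiv.subRight i) _ _ (fun k => by simp)
  rw [key]
  -- index facts
  have hi1 : 1 ≤ (i : ℕ) := Nat.one_le_iff_ne_zero.mpr (fun h => hi (Fin.ext h))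
  have hid : (i : ℕ) ≤ d := Nat.lt_succ_iff.mp i.isLt
  have hval1 : ((0 - i : Fin (d + 1)) : ℕ) = d + 1 - (i : ℕ) := by
    rw [Fin.sub_def]
    simp only [Fin.val_zero, Nat.zero_add]
    exact Nat.mod_eq_of_lt (by omega)
  have hval2 : ((Fin.last d - i : Fin (d + 1)) : ℕ) = d - (i : ℕ) := by
    rw [Fin.sub_def]
    simp only [Fin.val_last]
    have h : d + 1 - (i : ℕ) + d = (d - (i : ℕ)) + (d + 1) := by omega
    rw [h, Nat.add_mod_right]
    exact Nat.mod_eq_of_lt (by omega)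
  have hne12 : (0 - i : Fin (d + 1)) ≠ Fin.last d - i := by
    intro h
    have := congrArg (Fin.val) h
    rw [hval1, hval2] at this
    omega
  -- split the sum
  have split : ∑ k, a k * v (k + i)
      = (∑ k, a k * m) + (a (0 - i) * (v 0 - m) + a (Fin.last d - i) * (v (Fin.last d) - m)) := by
    have h1 : ∑ k, a k * v (k + i) = ∑ k, (a k * m + a k * (v (k + i) - m)) := by
      apply Finset.sum_congr rfl; intro k _; ring
    rw [h1, Finset.sum_add_distrib]
    congr 1
    have h2 : ∑ k, a k * (v (k + i) - m)
        = ∑ k ∈ ({0 - i, Fin.last d - i} : Finset (Fin (d + 1))), a k * (v (k + i) - m) := by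
      symm
      apply Finset.sum_subset (Finset.subset_univ _)
      intro k _ hk
      simp only [Finset.mem_insert, Finset.mem_singleton] at hk
      push_neg at hk
      have hk1 : k + i ≠ 0 := by
        intro h; exact hk.1 (by rw [← h]; abel)
      have hk2 : k + i ≠ Fin.last d := by
        intro h; exact hk.2 (by rw [← h]; abel)
      rw [hvmid _ hk1 hk2, sub_self, mul_zero]
    rw [h2, Finset.sum_pair hne12]
    have e1 : (0 - i) + i = 0 := by abel
    have e2 : (Fin.last d - i) + i = Fin.last d := by abel
    rw [e1, e2]
  rw [split]
  -- geometric sum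
  have hgeom : ∑ k : Fin (d + 1), δ ^ (k : ℕ) = (δ ^ (d + 1) - 1) / (δ - 1) := by
    rw [Fin.sum_univ_eq_sum_range (fun k => δ ^ k), geom_sum_eq (by intro h; exact hδne (by rw [h]; ring))]
  have hsum : ∑ k : Fin (d + 1), a k * m = ((δ ^ (d + 1) - 1) / (δ - 1) - (d + 1)) * m := by
    have : ∑ k : Fin (d + 1), a k * m = (∑ k : Fin (d + 1), (δ ^ (k : ℕ) - 1)) * m := by
      rw [Finset.sum_mul]; apply Finset.sum_congr rfl; intro k _; rw [ha k]
    rw [this, Finset.sum_sub_distrib, hgeom]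
    simp [Finset.card_univ]
  rw [hsum, ha (0 - i), ha (Fin.last d - i), ha (Fin.last d), hval1, hval2, hv0, hvlast,
    Fin.val_last]
  -- rewrite powers
  have p1 : δ ^ (d + 1 - (i : ℕ)) = δ ^ (d - (i : ℕ)) * δ := by
    rw [← pow_succ]; congr 1; omega
  have p2 : δ ^ d = δ ^ (d - (i : ℕ)) * δ ^ (i : ℕ) := by
    rw [← pow_add]; congr 1; omega
  have p3 : δ ^ (d + 1) = δ ^ (d - (i : ℕ)) * δ ^ (i : ℕ) * δ := by
    rw [pow_succ, ← p2]
  have p4 : δ ^ (d + 2) = δ ^ (d - (i : ℕ)) * δ ^ (i : ℕ) * δ * δ := by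
    rw [show d + 2 = (d + 1) + 1 by ring, pow_succ, ← p3]
  have hne3 : δ ^ (d - (i : ℕ)) * δ ^ (i : ℕ) * δ - 1 ≠ 0 := by rw [← p3]; exact hpne
  rw [p1, p2, p3, p4, hm, p2, p3]
  field_simp [hδne, hne3]
  ring
end

section
/- With d >= 2, delta = (1 - sqrt(2/(d+1)))^{-1}, a_i = delta^{i-1} - 1, and v as in the explicit formulas (v_1 = (1 - d*delta^d + (d-2)*delta^{d+1} + delta^{d+2})/((delta-1)(delta^{d+1}-1)), v_2 = ... = v_d = (delta-1)*delta^d/(delta^{d+1}-1), v_{d+1} = (-delta + delta^d + (d-1)*delta^{d+1} - (d-1)*delta^{d+2})/((delta-1)(delta^{d+1}-1))), the inner product <a, v> is strictly less than a_{d+1} = delta^d - 1. -/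
/-- The inner product `⟨a, v⟩` is strictly less than `a_{d+1} = δ^d - 1`. -/
theorem stmt_8 (d : ℕ) (hd : 2 ≤ d) (δ : ℝ) (hδ : δ = (1 - Real.sqrt (2 / (d + 1)))⁻¹)
    (a : Fin (d + 1) → ℝ) (ha : ∀ i : Fin (d + 1), a i = δ ^ (i : ℕ) - 1)
    (v : Fin (d + 1) → ℝ)
    (hv0 : v 0 = (1 - d * δ ^ d + ((d : ℝ) - 2) * δ ^ (d + 1) + δ ^ (d + 2)) /
      ((δ - 1) * (δ ^ (d + 1) - 1)))
    (hvmid : ∀ i : Fin (d + 1), i ≠ 0 → i ≠ Fin.last d →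
      v i = (δ - 1) * δ ^ d / (δ ^ (d + 1) - 1))
    (hvlast : v (Fin.last d) = (-δ + δ ^ d + ((d : ℝ) - 1) * δ ^ (d + 1) -
      ((d : ℝ) - 1) * δ ^ (d + 2)) / ((δ - 1) * (δ ^ (d + 1) - 1))) :
    ∑ j, a j * v j < δ ^ d - 1 := by
  have hd1 : (2:ℝ) ≤ (d:ℝ) := by exact_mod_cast hd
  have hs0 : 0 < Real.sqrt (2 / (d + 1)) := Real.sqrt_pos.2 (by positivity)
  have hs1 : Real.sqrt (2 / (d + 1)) < 1 := by
    have h2 : (2 : ℝ) / (d + 1) < 1 := by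
      rw [div_lt_one (by positivity)]; linarith
    calc Real.sqrt (2 / (d+1)) < Real.sqrt 1 := Real.sqrt_lt_sqrt (by positivity) h2
      _ = 1 := Real.sqrt_one
  have hδ1 : 1 < δ := by
    rw [hδ]
    have h1 : 0 < 1 - Real.sqrt (2 / (d + 1)) := by linarith
    have h3 : 0 < (1 - Real.sqrt (2 / (d + 1)))⁻¹ := inv_pos.2 h1
    have h4 : (1 - Real.sqrt (2 / (d + 1))) * (1 - Real.sqrt (2 / (d + 1)))⁻¹ = 1 :=
      mul_inv_cancel₀ h1.ne'
    nlinarith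
  have hδ0 : (0:ℝ) < δ - 1 := by linarith
  have hD1 : 1 < δ ^ d := one_lt_pow₀ hδ1 (by omega)
  have hP1 : 1 < δ ^ (d+1) := one_lt_pow₀ hδ1 (by omega)
  have hne1 : δ - 1 ≠ 0 := ne_of_gt hδ0
  have hne2 : δ ^ (d+1) - 1 ≠ 0 := by nlinarith
  -- key strict inequality
  have hq : δ ^ d - 1 < (d:ℝ) * (δ - 1) * δ ^ d := by
    have hsum : (∑ i ∈ Finset.range d, δ ^ i) * (δ - 1) = δ ^ d - 1 := geom_sum_mul δ d
    have hlt : ∑ i ∈ Finset.range d, δ ^ i < ∑ _i ∈ Finset.range d, δ ^ d := by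
      apply Finset.sum_lt_sum_of_nonempty (Finset.nonempty_range_iff.2 (by omega))
      intro i hi
      exact pow_lt_pow_right₀ hδ1 (Finset.mem_range.1 hi)
    rw [Finset.sum_const, Finset.card_range, nsmul_eq_mul] at hlt
    nlinarith
  have hpairne : (0 : Fin (d+1)) ≠ Fin.last d := by
    intro h
    have := congrArg Fin.val h
    simp [Fin.last] at this
    omega
  set T : Finset (Fin (d+1)) := Finset.univ \ {0, Fin.last d} with hT
  have hsplit : ∑ j, a j * v j
      = (∑ j ∈ T, a j * v j) + (a 0 * v 0 + a (Fin.last d) * v (Fin.last d)) := by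
    rw [← Finset.sum_sdiff (Finset.subset_univ ({0, Fin.last d} : Finset (Fin (d+1)))),
      Finset.sum_pair hpairne]
  have ha0 : a 0 = 0 := by rw [ha 0]; simp
  have halast : a (Fin.last d) = δ ^ d - 1 := by rw [ha]; simp [Fin.last]
  have hTsum : ∑ j ∈ T, a j * v j
      = (∑ j ∈ T, (δ ^ (j:ℕ) - 1)) * ((δ - 1) * δ ^ d / (δ ^ (d + 1) - 1)) := by
    rw [Finset.sum_mul]
    apply Finset.sum_congr rfl
    intro i hi
    simp only [hT, Finset.mem_sdiff, Finset.mem_insert, Finset.mem_singleton] at hi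
    rw [ha i, hvmid i (by tauto) (by tauto)]
  have hTsum2 : ∑ j ∈ T, (δ ^ (j:ℕ) - 1)
      = ((δ ^ (d+1) - 1) / (δ - 1) - ((d:ℝ) + 1)) - (δ ^ d - 1) := by
    have h1 : (∑ j ∈ T, (δ ^ (j:ℕ) - 1)) + ((δ ^ (0:ℕ) - 1) + (δ ^ d - 1))
        = ∑ j : Fin (d+1), (δ ^ (j:ℕ) - 1) := by
      rw [← Finset.sum_sdiff (Finset.subset_univ ({0, Fin.last d} : Finset (Fin (d+1)))),
        Finset.sum_pair hpairne]
      simp only [Fin.val_zero, Fin.val_last, hT]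
    have h2 : ∑ j : Fin (d+1), (δ ^ (j:ℕ) - 1) = ∑ j ∈ Finset.range (d+1), (δ ^ j - 1) :=
      Fin.sum_univ_eq_sum_range (fun j => δ ^ j - 1) (d+1)
    have h3 : ∑ j ∈ Finset.range (d+1), (δ ^ j - 1)
        = (δ ^ (d+1) - 1) / (δ - 1) - ((d:ℝ) + 1) := by
      rw [Finset.sum_sub_distrib, geom_sum_eq hδ1.ne', Finset.sum_const, Finset.card_range,
        nsmul_eq_mul]
      push_cast
      ring
    rw [h2, h3] at h1
    simp only [pow_zero] at h1
    linarith
  have hsum : ∑ j, a j * v j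
      = (((δ ^ (d+1) - 1) / (δ - 1) - ((d:ℝ) + 1)) - (δ ^ d - 1))
          * ((δ - 1) * δ ^ d / (δ ^ (d + 1) - 1))
        + (δ ^ d - 1) * ((-δ + δ ^ d + ((d : ℝ) - 1) * δ ^ (d + 1) -
            ((d : ℝ) - 1) * δ ^ (d + 2)) / ((δ - 1) * (δ ^ (d + 1) - 1))) := by
    rw [hsplit, hTsum, hTsum2, ha0, halast, hvlast]
    ring
  rw [hsum]
  have heq : (δ ^ d - 1) -
      ((((δ ^ (d+1) - 1) / (δ - 1) - ((d:ℝ) + 1)) - (δ ^ d - 1))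
          * ((δ - 1) * δ ^ d / (δ ^ (d + 1) - 1))
        + (δ ^ d - 1) * ((-δ + δ ^ d + ((d : ℝ) - 1) * δ ^ (d + 1) -
            ((d : ℝ) - 1) * δ ^ (d + 2)) / ((δ - 1) * (δ ^ (d + 1) - 1))))
      = (δ * δ ^ d - 1) * ((d:ℝ) * (δ - 1) * δ ^ d - (δ ^ d - 1))
          / ((δ - 1) * (δ ^ (d+1) - 1)) := by
    field_simp
    ring
  have hpos : 0 < (δ * δ ^ d - 1) * ((d:ℝ) * (δ - 1) * δ ^ d - (δ ^ d - 1))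
      / ((δ - 1) * (δ ^ (d+1) - 1)) := by
    apply div_pos
    · apply mul_pos
      · nlinarith
      · linarith
    · apply mul_pos hδ0
      nlinarith
  linarith
end

section
/- Let v in R^{d+1} (d >= 2) satisfy v_1 >= v_2 = v_3 = ... = v_d >= v_{d+1}. Let c in Z^{d+1} be such that c_1 >= c_j for all j in [d], c_1 > c_{d+1}, and let j in [d] be the smallest index with c_j > c_{j+1}. Then <c, v - v^j> >= v_1 - v_{d+1}, where v^j is the cyclic right shift of v by j positions. -/
set_option maxHeartbeats 1000000

/-- Key estimate in the lattice-width lower bound: with `v_1 ≥ v_2 = ⋯ = v_d ≥ v_{d+1}`,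
`c` integral with `c_1 ≥ c_j` for `j ∈ [d]`, `c_1 > c_{d+1}`, and `j ∈ [d]` the smallest
index with `c_j > c_{j+1}` (0-indexed position `j`), we have
`⟨c, v - v^{j+1}⟩ ≥ v_1 - v_{d+1}` where `v^{j+1}` is the cyclic right shift by the
1-based index. -/
theorem stmt_12 (d : ℕ) (hd : 2 ≤ d) (v : Fin (d + 1) → ℝ)
    (hvmid : ∀ k : Fin (d + 1), k ≠ 0 → k ≠ Fin.last d → v k = v 1)
    (hv01 : v 1 ≤ v 0) (hvlast : v (Fin.last d) ≤ v 1)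
    (c : Fin (d + 1) → ℤ)
    (hcmax : ∀ k : Fin (d + 1), (k : ℕ) < d → c k ≤ c 0)
    (hclast : c (Fin.last d) < c 0)
    (j : Fin (d + 1)) (hj : (j : ℕ) < d) (hjdec : c (j + 1) < c j)
    (hjmin : ∀ k : Fin (d + 1), (k : ℕ) < (j : ℕ) → c k ≤ c (k + 1)) :
    v 0 - v (Fin.last d) ≤ ∑ k, (c k : ℝ) * (v k - v (k - (j + 1))) := by
  -- c 0 ≤ c j by induction along the chain
  have hc0j : c 0 ≤ c j := by
    have main : ∀ n : ℕ, ∀ hn : n ≤ (j : ℕ), c 0 ≤ c ⟨n, by omega⟩ := by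
      intro n
      induction n with
      | zero =>
        intro _
        have : (⟨0, by omega⟩ : Fin (d + 1)) = 0 := rfl
        rw [this]
      | succ n ih =>
        intro hn
        have h1 := ih (by omega)
        have h2 := hjmin ⟨n, by omega⟩ (by simp only [Fin.val_mk]; omega)
        have h3 : (⟨n, by omega⟩ : Fin (d + 1)) + 1 = ⟨n + 1, by omega⟩ := by
          apply Fin.ext
          simp [Fin.add_def]
          omega
        rw [h3] at h2
        exact le_trans h1 h2
    have h := main (j : ℕ) le_rfl
    rwa [Fin.eta] at h
  have hcj : c j = c 0 := le_antisymm (hcmax j hj) hc0j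
  set s : Fin (d + 1) := j + 1 with hs
  -- g k := c k - c (k + s)
  set g : Fin (d + 1) → ℝ := fun k => (c k : ℝ) - (c (k + s) : ℝ) with hg
  have step1 : ∑ k, (c k : ℝ) * (v k - v (k - s)) = ∑ k, g k * v k := by
    have e1 : ∑ k, (c k : ℝ) * v (k - s) = ∑ k, (c (k + s) : ℝ) * v k := by
      apply Fintype.sum_equiv (Equiv.subRight s)
      intro k
      simp
    calc ∑ k, (c k : ℝ) * (v k - v (k - s))
        = ∑ k, ((c k : ℝ) * v k - (c k : ℝ) * v (k - s)) := by
          apply Finset.sum_congr rfl; intro k _; ring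
      _ = ∑ k, (c k : ℝ) * v k - ∑ k, (c k : ℝ) * v (k - s) := by
          rw [Finset.sum_sub_distrib]
      _ = ∑ k, (c k : ℝ) * v k - ∑ k, (c (k + s) : ℝ) * v k := by rw [e1]
      _ = ∑ k, g k * v k := by
          rw [← Finset.sum_sub_distrib]
          apply Finset.sum_congr rfl; intro k _; simp [hg]; ring
  have hsum0 : ∑ k, g k = 0 := by
    have e2 : ∑ k, (c (k + s) : ℝ) = ∑ k, (c k : ℝ) := by
      apply Fintype.sum_equiv (Equiv.addRight s)
      intro k
      simp
    simp only [hg, Finset.sum_sub_distrib, e2, sub_self]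
  have step2 : ∑ k, g k * v k = ∑ k, g k * (v k - v 1) := by
    have : ∑ k, g k * v k - ∑ k, g k * (v k - v 1) = (∑ k, g k) * v 1 := by
      rw [← Finset.sum_sub_distrib, Finset.sum_mul]
      apply Finset.sum_congr rfl; intro k _; ring
    rw [hsum0, zero_mul] at this
    linarith
  have hne : (0 : Fin (d + 1)) ≠ Fin.last d := by
    intro h
    have := congrArg Fin.val h
    simp [Fin.last] at this
    omega
  have step3 : ∑ k, g k * (v k - v 1) = g 0 * (v 0 - v 1) + g (Fin.last d) * (v (Fin.last d) - v 1) := by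
    rw [← Finset.sum_subset (Finset.subset_univ {0, Fin.last d})]
    · rw [Finset.sum_pair hne]
    · intro k _ hk
      simp only [Finset.mem_insert, Finset.mem_singleton, not_or] at hk
      rw [hvmid k hk.1 hk.2]
      ring
  -- identify g 0 and g (last)
  have hlastadd : Fin.last d + s = j := by
    have h0 : Fin.last d + 1 = 0 := by
      apply Fin.ext
      simp [Fin.add_def, Fin.last]
    rw [hs, add_comm j 1, ← add_assoc, h0, zero_add]
  have hg0 : g 0 = (c 0 : ℝ) - (c s : ℝ) := by simp [hg]
  have hglast : g (Fin.last d) = (c (Fin.last d) : ℝ) - (c 0 : ℝ) := by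
    rw [hg]
    simp only [hlastadd, hcj]
  -- integrality bounds
  have ha : (1 : ℝ) ≤ (c 0 : ℝ) - (c s : ℝ) := by
    have h' : c s + 1 ≤ c 0 := by rw [← hcj]; omega
    have h'' : (c s : ℝ) + 1 ≤ (c 0 : ℝ) := by exact_mod_cast h'
    linarith
  have hb : (1 : ℝ) ≤ (c 0 : ℝ) - (c (Fin.last d) : ℝ) := by
    have h' : c (Fin.last d) + 1 ≤ c 0 := by omega
    have h'' : (c (Fin.last d) : ℝ) + 1 ≤ (c 0 : ℝ) := by exact_mod_cast h'
    linarith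
  rw [step1, step2, step3, hg0, hglast]
  nlinarith [mul_le_mul_of_nonneg_right ha (by linarith : (0:ℝ) ≤ v 0 - v 1),
    mul_le_mul_of_nonneg_right hb (by linarith : (0:ℝ) ≤ v 1 - v (Fin.last d))]
end
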